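/- In the boundary dynamical system on the edge z = 0, the increments of the first coordinate satisfy x_{n+1} - x_n = ρ(1 - c_n)(x_{n-1} - x_n) for n ≥ 1, and hence |x_{n+1} - x_n| ≤ (1/4)|x_{n-1} - x_{n-2}| for n ≥ 2; consequently (x_n) converges. -/

import Mathlib

/-!
Write `c_n = q n 2`. On the simplex, `Mb x` sends `c` to `1 - c` and puts `(1 - x) c` in the
first coordinate, so `c_{n+1} = 1 - c_n`, and substituting into the update rule gives
`x_{n+2} - x_{n+1} = -ρ c_n (x_{n+1} - x_n)`. Two consecutive steps multiply the increment by
`ρ² c_n (1 - c_n) ≤ 1/4`, so the increments decay geometrically and `x` is a Cauchy sequence.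
-/

open Matrix Filter

noncomputable def Mb (x : ℝ) : Matrix (Fin 3) (Fin 3) ℝ :=
  !![0, 0, 1 - x; 0, 0, x; 1, 1, 0]

def inSimplex (v : Fin 3 → ℝ) : Prop := (∀ i, 0 ≤ v i) ∧ v 0 + v 1 + v 2 = 1

lemma Mb_mulVec_zero (x : ℝ) (v : Fin 3 → ℝ) : (Mb x *ᵥ v) 0 = (1 - x) * v 2 := by
  simp [Mb, mulVec, dotProduct, Fin.sum_univ_three]

lemma inSimplex.le_one {v : Fin 3 → ℝ} (hv : inSimplex v) (i : Fin 3) : v i ≤ 1 := by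
  calc v i ≤ ∑ j, v j := Finset.single_le_sum (fun j _ => hv.1 j) (Finset.mem_univ i)
    _ = 1 := by rw [Fin.sum_univ_three, hv.2]

lemma inSimplex.Mb_mulVec_two {v : Fin 3 → ℝ} (hv : inSimplex v) (x : ℝ) :
    (Mb x *ᵥ v) 2 = 1 - v 2 := by
  rw [eq_sub_iff_add_eq, ← hv.2]
  simp [Mb, mulVec, dotProduct, Fin.sum_univ_three]

lemma abs_sq_mul_mul_one_sub_le {ρ c : ℝ} (hρ : ρ ^ 2 ≤ 1) (hc₀ : 0 ≤ c) (hc₁ : c ≤ 1) :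
    |ρ ^ 2 * c * (1 - c)| ≤ 1 / 4 := by
  have hc : 0 ≤ c * (1 - c) := mul_nonneg hc₀ (sub_nonneg.2 hc₁)
  rw [mul_assoc, abs_of_nonneg (mul_nonneg (sq_nonneg ρ) hc)]
  nlinarith [sq_nonneg (c - 1 / 2)]

theorem cauchySeq_of_dist_add_two_le {α : Type*} [PseudoMetricSpace α] {x : ℕ → α} {r : ℝ}
    (hr₀ : 0 < r) (hr₁ : r < 1)
    (h : ∀ n, dist (x (n + 3)) (x (n + 2)) ≤ r ^ 2 * dist (x (n + 1)) (x n)) :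
    CauchySeq x := by
  set C := max (dist (x 0) (x 1)) (dist (x 1) (x 2) / r)
  refine cauchySeq_of_le_geometric r C hr₁ fun n => ?_
  induction n using Nat.twoStepInduction with
  | zero => simp [C]
  | one => simpa [C] using (div_le_iff₀ hr₀).1 (le_max_right (dist (x 0) (x 1)) _)
  | more n ih _ =>
    calc dist (x (n + 2)) (x (n + 2 + 1))
        ≤ r ^ 2 * dist (x n) (x (n + 1)) := by simpa only [dist_comm] using h n
      _ ≤ r ^ 2 * (C * r ^ n) := by gcongr
      _ = C * r ^ (n + 2) := by ring

section BoundaryOrbit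

variable {ρ : ℝ} {x : ℕ → ℝ} {q : ℕ → Fin 3 → ℝ}

theorem boundaryOrbit_increment (hqS : ∀ n, inSimplex (q n))
    (hq : ∀ n, q (n + 1) = Mb (x n) *ᵥ q n)
    (hx : ∀ n, x (n + 1) = (1 - ρ) * x n + ρ * (1 - q n 0 - q (n + 1) 0)) (n : ℕ) :
    x (n + 2) - x (n + 1) = ρ * (1 - q (n + 1) 2) * (x n - x (n + 1)) := by
  have hc : q (n + 1) 2 = 1 - q n 2 := by rw [hq n, (hqS n).Mb_mulVec_two]
  have ha : ∀ k, q (k + 1) 0 = (1 - x k) * q k 2 := fun k => by rw [hq k, Mb_mulVec_zero]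
  rw [hx (n + 1), ha (n + 1), ha n, hx n, hc]
  ring

theorem boundaryOrbit_increment_add_two (hqS : ∀ n, inSimplex (q n))
    (hq : ∀ n, q (n + 1) = Mb (x n) *ᵥ q n)
    (hx : ∀ n, x (n + 1) = (1 - ρ) * x n + ρ * (1 - q n 0 - q (n + 1) 0)) (n : ℕ) :
    x (n + 3) - x (n + 2) = ρ ^ 2 * q (n + 1) 2 * (1 - q (n + 1) 2) * (x (n + 1) - x n) := by
  have hc : q (n + 2) 2 = 1 - q (n + 1) 2 := by rw [hq (n + 1), (hqS (n + 1)).Mb_mulVec_two]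
  have h₁ := boundaryOrbit_increment hqS hq hx (n + 1)
  have h₀ := boundaryOrbit_increment hqS hq hx n
  rw [hc] at h₁
  linear_combination h₁ - ρ * q (n + 1) 2 * h₀

end BoundaryOrbit

theorem stmt11_general (ρ : ℝ) (hρ : ρ ∈ Set.Ioo (0 : ℝ) 1)
    (x : ℕ → ℝ) (q : ℕ → Fin 3 → ℝ)
    (hqS : ∀ n, inSimplex (q n))
    (hq : ∀ n, q (n + 1) = (Mb (x n)).mulVec (q n))
    (hx : ∀ n, x (n + 1) = (1 - ρ) * x n + ρ * (1 - q n 0 - q (n + 1) 0)) :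
    (∀ n, x (n + 2) - x (n + 1) = ρ * (1 - q (n + 1) 2) * (x n - x (n + 1))) ∧
    (∀ n, |x (n + 3) - x (n + 2)| ≤ (1 / 4) * |x (n + 1) - x n|) ∧
    (∃ L : ℝ, Tendsto x atTop (nhds L)) := by
  have hρ2 : ρ ^ 2 ≤ 1 := pow_le_one₀ hρ.1.le hρ.2.le
  have contraction : ∀ n, |x (n + 3) - x (n + 2)| ≤ (1 / 4) * |x (n + 1) - x n| := fun n => by
    rw [boundaryOrbit_increment_add_two hqS hq hx n, abs_mul]
    gcongr
    exact abs_sq_mul_mul_one_sub_le hρ2 ((hqS (n + 1)).1 2) ((hqS (n + 1)).le_one 2)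
  refine ⟨boundaryOrbit_increment hqS hq hx, contraction, cauchySeq_tendsto_of_complete ?_⟩
  refine cauchySeq_of_dist_add_two_le (r := 1 / 2) (by norm_num) (by norm_num) fun n => ?_
  simpa only [Real.dist_eq, show (1 / 2 : ℝ) ^ 2 = 1 / 4 by norm_num] using contraction n

/-- In the boundary dynamical system on the edge `z = 0`, the increments of the first
coordinate satisfy `x_{n+1} - x_n = ρ(1 - c_n)(x_{n-1} - x_n)` for `n ≥ 1`, and hence
`|x_{n+1} - x_n| ≤ (1/4)|x_{n-1} - x_{n-2}|` for `n ≥ 2`; consequently `(x_n)`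
converges. -/
theorem stmt11 (ρ : ℝ) (hρ : ρ ∈ Set.Ioo (0 : ℝ) 1)
    (x : ℕ → ℝ) (q : ℕ → Fin 3 → ℝ)
    (hx0 : x 0 ∈ Set.Ioo (0 : ℝ) 1) (hqS : ∀ n, inSimplex (q n))
    (hq : ∀ n, q (n + 1) = (Mb (x n)).mulVec (q n))
    (hx : ∀ n, x (n + 1) = (1 - ρ) * x n + ρ * (1 - q n 0 - q (n + 1) 0)) :
    (∀ n, x (n + 2) - x (n + 1) = ρ * (1 - q (n + 1) 2) * (x n - x (n + 1))) ∧
    (∀ n, |x (n + 3) - x (n + 2)| ≤ (1 / 4) * |x (n + 1) - x n|) ∧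
    (∃ L : ℝ, Tendsto x atTop (nhds L)) :=
  stmt11_general ρ hρ x q hqS hq hx
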